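/- arXiv:2602.15713 — 3 statements merged into one kernel-verified Lean document; each statement's English description precedes it below -/
import Mathlib

section
/- Let H be a complex Hilbert space and let T be a bounded linear operator on H that is complex symmetric, i.e., there exists a conjugation C on H with T = C T* C. Then: (1) m(T) = m(T*); (2) T is bounded below if and only if T is invertible in B(H); (3) m(T) > 0 if and only if T is invertible in B(H). -/
/-!
Since `C` is an isometric involution, `‖T x‖ = ‖T* (C x)‖`, so `T` and `T*` have the same minimum
modulus and are bounded below together. In a Hilbert space `T` is invertible as soon as `T` and
`T*` are both bounded below: the range of `T` is then closed, and dense because its orthogonal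
complement is `ker T* = 0`.
-/

noncomputable section

def minMod {E F : Type*} [NormedAddCommGroup E] [NormedSpace ℂ E]
    [NormedAddCommGroup F] [NormedSpace ℂ F] (T : E →L[ℂ] F) : ℝ :=
  ⨅ x : {x : E // ‖x‖ = 1}, ‖T x.1‖

open ContinuousLinearMap

section BoundedBelow

variable {𝕜 E F : Type*} [NormedField 𝕜] [NormedAddCommGroup E] [NormedSpace 𝕜 E]
  [NormedAddCommGroup F] [NormedSpace 𝕜 F]

def IsBoundedBelow (T : E →L[𝕜] F) : Prop :=
  ∃ c : ℝ, 0 < c ∧ ∀ x, c * ‖x‖ ≤ ‖T x‖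

theorem isBoundedBelow_iff_exists_antilipschitzWith {T : E →L[𝕜] F} :
    IsBoundedBelow T ↔ ∃ K, AntilipschitzWith K T := by
  constructor
  · rintro ⟨c, hc, hT⟩
    refine ⟨⟨c⁻¹, inv_nonneg.2 hc.le⟩, T.antilipschitz_of_bound fun x => ?_⟩
    change ‖x‖ ≤ c⁻¹ * ‖T x‖
    rw [inv_mul_eq_div, le_div_iff₀ hc, mul_comm]
    exact hT x
  · rintro ⟨K, hK⟩
    have hK1 : (0 : ℝ) < K + 1 := by positivity
    refine ⟨(K + 1)⁻¹, inv_pos.2 hK1, fun x => ?_⟩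
    rw [inv_mul_le_iff₀ hK1]
    calc ‖x‖ ≤ K * ‖T x‖ := T.bound_of_antilipschitz hK x
      _ ≤ (K + 1) * ‖T x‖ := by gcongr; linarith

end BoundedBelow

section Hilbert

variable {𝕜 H : Type*} [RCLike 𝕜] [NormedAddCommGroup H] [InnerProductSpace 𝕜 H] [CompleteSpace H]

theorem isUnit_iff_isBoundedBelow_and_isBoundedBelow_adjoint {T : H →L[𝕜] H} :
    IsUnit T ↔ IsBoundedBelow T ∧ IsBoundedBelow (adjoint T) := by
  simp only [isBoundedBelow_iff_exists_antilipschitzWith]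
  constructor
  · intro hT
    have hT' : IsUnit (adjoint T) := by simpa only [star_eq_adjoint] using hT.star
    exact ⟨((bijective_iff_dense_range_and_antilipschitz T).1 (isUnit_iff_bijective.1 hT)).2,
      ((bijective_iff_dense_range_and_antilipschitz _).1 (isUnit_iff_bijective.1 hT')).2⟩
  · rintro ⟨hT, K, hK⟩
    rw [isUnit_iff_bijective, bijective_iff_dense_range_and_antilipschitz,
      Submodule.topologicalClosure_eq_top_iff, orthogonal_range]
    exact ⟨LinearMap.ker_eq_bot.2 hK.injective, hT⟩

end Hilbert

section MinimumModulus

variable {E F G : Type*} [NormedAddCommGroup E] [NormedSpace ℂ E] [NormedAddCommGroup F]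
  [NormedSpace ℂ F] [NormedAddCommGroup G] [NormedSpace ℂ G]

theorem minMod_mul_norm_le (T : E →L[ℂ] F) (x : E) : minMod T * ‖x‖ ≤ ‖T x‖ := by
  rcases eq_or_ne x 0 with rfl | hx
  · simp
  have hx' : ‖x‖ ≠ 0 := norm_ne_zero_iff.2 hx
  have hbdd : BddBelow (Set.range fun u : {u : E // ‖u‖ = 1} => ‖T u.1‖) :=
    ⟨0, by rintro _ ⟨u, rfl⟩; exact norm_nonneg _⟩
  have hunit : ‖‖x‖⁻¹ • x‖ = 1 := by rw [norm_smul, norm_inv, norm_norm, inv_mul_cancel₀ hx']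
  have h := ciInf_le hbdd ⟨‖x‖⁻¹ • x, hunit⟩
  rw [T.map_smul_of_tower, norm_smul, norm_inv, norm_norm, inv_mul_eq_div,
    le_div_iff₀ (norm_pos_iff.2 hx)] at h
  exact h

theorem le_minMod [Nontrivial E] {T : E →L[ℂ] F} {c : ℝ} (h : ∀ x, c * ‖x‖ ≤ ‖T x‖) :
    c ≤ minMod T := by
  obtain ⟨x, hx⟩ := exists_norm_eq E zero_le_one
  have : Nonempty {x : E // ‖x‖ = 1} := ⟨⟨x, hx⟩⟩
  exact le_ciInf fun u => by simpa only [u.2, mul_one] using h u.1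

theorem isBoundedBelow_iff_minMod_pos [Nontrivial E] (T : E →L[ℂ] F) :
    IsBoundedBelow T ↔ 0 < minMod T :=
  ⟨fun ⟨_, hc, hT⟩ => hc.trans_le (le_minMod hT),
    fun h => ⟨minMod T, h, minMod_mul_norm_le T⟩⟩

theorem minMod_eq_of_norm_apply_eq {S : E →L[ℂ] F} {T : E →L[ℂ] G} {σ : E → E}
    (hσ : Function.Surjective σ) (hσnorm : ∀ x, ‖σ x‖ = ‖x‖) (hST : ∀ x, ‖S x‖ = ‖T (σ x)‖) :
    minMod S = minMod T := by
  let e : {x : E // ‖x‖ = 1} → {x : E // ‖x‖ = 1} := fun x => ⟨σ x, (hσnorm x).trans x.2⟩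
  have he : Function.Surjective e := fun y => by
    obtain ⟨x, hx⟩ := hσ y.1
    exact ⟨⟨x, (hσnorm x).symm.trans (hx ▸ y.2)⟩, Subtype.ext hx⟩
  simp only [minMod, hST]
  exact he.iInf_comp fun y => ‖T y.1‖

end MinimumModulus

theorem complex_symmetric_minMod_boundedBelow_invertible_general
    {H : Type*} [NormedAddCommGroup H] [InnerProductSpace ℂ H] [CompleteSpace H]
    [Nontrivial H] (T : H →L[ℂ] H) (C : H → H)
    (hCnorm : ∀ x, ‖C x‖ = ‖x‖)
    (hCinv : ∀ x, C (C x) = x)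
    (hT : ∀ x, T x = C (ContinuousLinearMap.adjoint T (C x))) :
    minMod T = minMod (ContinuousLinearMap.adjoint T)
    ∧ ((∃ c : ℝ, 0 < c ∧ ∀ x, c * ‖x‖ ≤ ‖T x‖) ↔ IsUnit T)
    ∧ (0 < minMod T ↔ IsUnit T) := by
  have hm : minMod T = minMod (adjoint T) :=
    minMod_eq_of_norm_apply_eq (Function.Involutive.surjective hCinv) hCnorm
      fun x => by rw [hT, hCnorm]
  have hunit : IsUnit T ↔ 0 < minMod T := by
    rw [isUnit_iff_isBoundedBelow_and_isBoundedBelow_adjoint, isBoundedBelow_iff_minMod_pos,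
      isBoundedBelow_iff_minMod_pos, ← hm, and_self]
  exact ⟨hm, (isBoundedBelow_iff_minMod_pos T).trans hunit.symm, hunit.symm⟩

/-- For a complex symmetric operator `T = C T* C` (with `C` a conjugation,
i.e. a conjugate-linear isometric involution): `m(T) = m(T*)`; `T` is bounded
below iff it is invertible; and `m(T) > 0` iff `T` is invertible. -/
theorem complex_symmetric_minMod_boundedBelow_invertible
    {H : Type*} [NormedAddCommGroup H] [InnerProductSpace ℂ H] [CompleteSpace H]
    [Nontrivial H] (T : H →L[ℂ] H) (C : H → H)
    (hCadd : ∀ x y, C (x + y) = C x + C y)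
    (hCsmul : ∀ (c : ℂ) x, C (c • x) = (starRingEnd ℂ c) • C x)
    (hCnorm : ∀ x, ‖C x‖ = ‖x‖)
    (hCinv : ∀ x, C (C x) = x)
    (hT : ∀ x, T x = C (ContinuousLinearMap.adjoint T (C x))) :
    minMod T = minMod (ContinuousLinearMap.adjoint T)
    ∧ ((∃ c : ℝ, 0 < c ∧ ∀ x, c * ‖x‖ ≤ ‖T x‖) ↔ IsUnit T)
    ∧ (0 < minMod T ↔ IsUnit T) :=
  complex_symmetric_minMod_boundedBelow_invertible_general T C hCnorm hCinv hT
end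
end

section
/- Let u be an inner function. The dual truncated Toeplitz operator D_{e₁} on K_u^⊥ (the dual truncated Toeplitz operator with symbol φ(ζ) = ζ) is an isometry if and only if u is a.e. equal to a constant of modulus 1. -/
open MeasureTheory Complex
open scoped InnerProductSpace ENNReal

noncomputable section

namespace DTTO

instance fact2pi : Fact (0 < 2 * Real.pi) := ⟨by positivity⟩

/-- The circle, realized as `ℝ / 2πℤ`. -/
abbrev 𝕋c := AddCircle (2 * Real.pi)

/-- Normalized Haar (Lebesgue) measure on the circle. -/
abbrev μT : Measure 𝕋c := AddCircle.haarAddCircle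

/-- `L²(𝕋)`. -/
abbrev L2 := Lp ℂ 2 μT

/-- `L∞(𝕋)`. -/
abbrev Linf := Lp ℂ ⊤ μT

lemma memL2_smul (φ : Linf) (f : L2) : MemLp (⇑φ • ⇑f) 2 μT :=
  (Lp.memLp f).smul (Lp.memLp φ)

/-- Multiplication operator `M_φ : L² → L²` by a function `φ ∈ L∞`. -/
def Mmul (φ : Linf) : L2 →L[ℂ] L2 :=
  LinearMap.mkContinuous
    { toFun := fun f => (memL2_smul φ f).toLp _
      map_add' := fun f g => by
        refine Lp.ext ?_
        filter_upwards [MemLp.coeFn_toLp (memL2_smul φ (f + g)),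
          MemLp.coeFn_toLp (memL2_smul φ f), MemLp.coeFn_toLp (memL2_smul φ g),
          Lp.coeFn_add f g,
          Lp.coeFn_add ((memL2_smul φ f).toLp _) ((memL2_smul φ g).toLp _)] with
            x h1 h2 h3 h4 h5
        rw [h1, h5]
        simp only [Pi.add_apply, h2, h3]
        simp only [Pi.smul_apply', h4, Pi.add_apply, smul_add]
      map_smul' := fun c f => by
        refine Lp.ext ?_
        filter_upwards [MemLp.coeFn_toLp (memL2_smul φ (c • f)),
          MemLp.coeFn_toLp (memL2_smul φ f),
          Lp.coeFn_smul c f,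
          Lp.coeFn_smul c ((memL2_smul φ f).toLp _)] with x h1 h2 h3 h4
        rw [h1, RingHom.id_apply, h4]
        simp only [Pi.smul_apply, Pi.smul_apply', h2, h3]
        exact smul_comm _ _ _ }
    ‖φ‖ (fun f => by
      simp only [LinearMap.coe_mk, AddHom.coe_mk]
      rw [Lp.norm_toLp, Lp.norm_def, Lp.norm_def]
      rw [← ENNReal.toReal_mul]
      refine ENNReal.toReal_mono ?_ ?_
      · exact ENNReal.mul_ne_top (Lp.eLpNorm_ne_top φ) (Lp.eLpNorm_ne_top f)
      · exact eLpNorm_smul_le_eLpNorm_top_mul_eLpNorm 2 (Lp.aestronglyMeasurable f) ⇑φ)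

/-- The canonical inclusion `L∞ ⊆ L²` (the measure is finite). -/
def toL2 (φ : Linf) : L2 := ((Lp.memLp φ).mono_exponent le_top).toLp _

/-- The Hardy space `H²`, the closed linear span in `L²` of the exponentials `e_n`, `n ≥ 0`. -/
def H2 : Submodule ℂ L2 :=
  (Submodule.span ℂ (Set.range fun n : ℕ => (fourierLp 2 (n : ℤ) : L2))).topologicalClosure

instance : CompleteSpace H2 := (Submodule.isClosed_topologicalClosure _).completeSpace_coe

/-- `H²₋ = L² ⊖ H²`. -/
def Hminus : Submodule ℂ L2 := H2ᗮ

instance : CompleteSpace Hminus := (Submodule.isClosed_orthogonal _).completeSpace_coe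

/-- `H∞ = H² ∩ L∞`. -/
def MemHinf (φ : Linf) : Prop := toL2 φ ∈ H2

/-- An inner function: an element of `H² ∩ L∞` of modulus one a.e. -/
structure IsInnerFn (u : Linf) : Prop where
  memH2 : MemHinf u
  unimod : ∀ᵐ z ∂μT, ‖u z‖ = 1

/-- `u` is nonconstant (not a.e. equal to a constant). -/
def Nonconst (u : Linf) : Prop := ¬ ∃ c : ℂ, (⇑u : 𝕋c → ℂ) =ᵐ[μT] fun _ => c

/-- The subspace `uH²` of `L²`. -/
def uH2 (u : Linf) : Submodule ℂ L2 := H2.map (Mmul u).toLinearMap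

/-- The model space `K_u = H² ⊖ uH² = H² ∩ (uH²)ᗮ`. -/
def Ku (u : Linf) : Submodule ℂ L2 := H2 ⊓ (uH2 u)ᗮ

lemma isClosed_Ku (u : Linf) : IsClosed ((Ku u : Set L2)) := by
  have h : (Ku u : Set L2) = (H2 : Set L2) ∩ ((uH2 u)ᗮ : Set L2) := rfl
  rw [h]
  exact (Submodule.isClosed_topologicalClosure _).inter (Submodule.isClosed_orthogonal _)

instance (u : Linf) : CompleteSpace (Ku u) := (isClosed_Ku u).completeSpace_coe

/-- `K_u^⊥ = L² ⊖ K_u`. -/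
def KuP (u : Linf) : Submodule ℂ L2 := (Ku u)ᗮ

instance (u : Linf) : CompleteSpace (KuP u) := (Submodule.isClosed_orthogonal _).completeSpace_coe

/-- Dual truncated Toeplitz operator `D_φ` on `K_u^⊥`. -/
def Dop (u φ : Linf) : KuP u →L[ℂ] KuP u :=
  Submodule.orthogonalProjectionOnto (KuP u) ∘L Mmul φ ∘L (KuP u).subtypeL

/-- Truncated Toeplitz operator `A_φ` on `K_u`. -/
def Aop (u φ : Linf) : Ku u →L[ℂ] Ku u :=
  Submodule.orthogonalProjectionOnto (Ku u) ∘L Mmul φ ∘L (Ku u).subtypeL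

/-- The operator `B_φ : K_u → K_u^⊥`, `B_φ f = (I - P_{K_u})(φ f)`. -/
def Bop (u φ : Linf) : Ku u →L[ℂ] KuP u :=
  Submodule.orthogonalProjectionOnto (KuP u) ∘L Mmul φ ∘L (Ku u).subtypeL

/-- Toeplitz operator `T_φ : H² → H²`. -/
def Top (φ : Linf) : H2 →L[ℂ] H2 :=
  Submodule.orthogonalProjectionOnto H2 ∘L Mmul φ ∘L H2.subtypeL

/-- Hankel operator `H_φ : H² → H²₋`. -/
def Hop (φ : Linf) : H2 →L[ℂ] Hminus :=
  Submodule.orthogonalProjectionOnto Hminus ∘L Mmul φ ∘L H2.subtypeL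

/-- The exponential `e₁(ζ) = ζ` as an element of `L∞`. -/
def e1 : Linf := fourierLp ⊤ 1

/-- The exponential `e₋₁(ζ) = ζ̄` as an element of `L∞`. -/
def eneg1 : Linf := fourierLp ⊤ (-1)

/-- The operator `Q : H²₋ → H²₋`, `Q g = P₋(e₁ g)`. -/
def Qop : Hminus →L[ℂ] Hminus :=
  Submodule.orthogonalProjectionOnto Hminus ∘L Mmul e1 ∘L Hminus.subtypeL

/-- `u(0)`, the 0-th Fourier coefficient. -/
def coef0 (u : Linf) : ℂ := fourierCoeff (⇑u) 0

/-- Minimum modulus of a bounded operator. -/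
def minMod {E F : Type*} [NormedAddCommGroup E] [NormedSpace ℂ E]
    [NormedAddCommGroup F] [NormedSpace ℂ F] (T : E →L[ℂ] F) : ℝ :=
  ⨅ x : {x : E // ‖x‖ = 1}, ‖T x.1‖

/-- Complex conjugation on `L∞`. -/
lemma memLinf_star (φ : Linf) : MemLp (fun z => (starRingEnd ℂ) (φ z)) ⊤ μT := by
  refine ⟨continuous_star.comp_aestronglyMeasurable (Lp.aestronglyMeasurable φ), ?_⟩
  rw [eLpNorm_congr_norm_ae (g := ⇑φ) (Filter.Eventually.of_forall fun z => norm_star _)]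
  exact Lp.eLpNorm_lt_top φ

/-- The complex conjugate `φ̄ ∈ L∞` of `φ ∈ L∞`. -/
def conjL (φ : Linf) : Linf := (memLinf_star φ).toLp _

lemma memLinf_mul (φ ψ : Linf) : MemLp (⇑φ • ⇑ψ) ⊤ μT :=
  (Lp.memLp ψ).smul (Lp.memLp φ)

/-- The pointwise product of two elements of `L∞`. -/
def mulL (φ ψ : Linf) : Linf := (memLinf_mul φ ψ).toLp _

end DTTO

namespace DTTO

lemma inner_fourierLp_eq_zero {m n : ℤ} (h : m ≠ n) :
    (inner ℂ (fourierLp 2 m : L2) (fourierLp 2 n : L2) : ℂ) = 0 := by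
  have hcoe := congrFun (coe_fourierBasis (T := 2 * Real.pi))
  have h2 := (fourierBasis (T := 2 * Real.pi)).orthonormal.2 (i := m) (j := n) h
  simpa only [hcoe] using h2

lemma span_le_orth_em1 :
    Submodule.span ℂ (Set.range fun n : ℕ => (fourierLp 2 (n : ℤ) : L2))
      ≤ (ℂ ∙ (fourierLp 2 (-1) : L2))ᗮ := by
  rw [Submodule.span_le]
  rintro x ⟨n, rfl⟩
  rw [SetLike.mem_coe, Submodule.mem_orthogonal]
  intro w hw
  obtain ⟨c, rfl⟩ := Submodule.mem_span_singleton.1 hw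
  rw [inner_smul_left, inner_fourierLp_eq_zero (by omega : (-1 : ℤ) ≠ (n : ℤ)), mul_zero]

lemma H2_le_orth_em1 : H2 ≤ (ℂ ∙ (fourierLp 2 (-1) : L2))ᗮ :=
  Submodule.topologicalClosure_minimal _ span_le_orth_em1 (Submodule.isClosed_orthogonal _)

/-- `e₋₁ ∈ H²₋`. -/
lemma em1_mem : (fourierLp 2 (-1) : L2) ∈ Hminus := by
  unfold Hminus
  rw [Submodule.mem_orthogonal]
  intro v hv
  have h := H2_le_orth_em1 hv
  rw [Submodule.mem_orthogonal] at h
  exact inner_eq_zero_symm.mp (h _ (Submodule.mem_span_singleton_self _))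

/-- `e₋₁` as an element of `H²₋`. -/
def em1 : Hminus := ⟨(fourierLp 2 (-1) : L2), em1_mem⟩

/-- For `f ∈ K_u`, the function `u f ∈ uH² ⊆ K_u^⊥`. -/
lemma mul_mem_KuP (u : Linf) (f : Ku u) : Mmul u (f : L2) ∈ KuP u := by
  unfold KuP
  rw [Submodule.mem_orthogonal]
  intro v hv
  have hv2 : v ∈ (uH2 u)ᗮ := (Submodule.mem_inf.1 hv).2
  have hm : Mmul u (f : L2) ∈ uH2 u :=
    Submodule.mem_map_of_mem (Submodule.mem_inf.1 f.2).1
  rw [Submodule.mem_orthogonal] at hv2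
  exact inner_eq_zero_symm.mp (hv2 _ hm)

lemma Ku_le_H2 (u : Linf) : Ku u ≤ H2 := inf_le_left

/-- The inclusion `K_u ⊆ H²` as a continuous linear map. -/
def KuIncl (u : Linf) : Ku u →L[ℂ] H2 :=
  LinearMap.mkContinuous (Submodule.inclusion (Ku_le_H2 u)) 1
    (fun f => by rw [one_mul]; exact le_of_eq rfl)

end DTTO

/-!
If `D_{e₁}` is isometric then, by Pythagoras, multiplication by `e₁` maps `K_u^⊥` into itself.
As `K_u^⊥ ⊇ H²₋ ∋ e₋₁`, it then contains every `e_n` with `n ≥ 0`, hence all of `H²`; so the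
model space `K_u ⊆ H² ⊆ K_u^⊥` is zero. For an inner function `u`, `K_u` contains the
reproducing kernel `1 - conj (u(0)) • u` at the origin, and its vanishing forces
`u = u(0)` with `|u(0)| = 1`. Conversely, a unimodular constant gives `uH² = H²`, so `K_u = 0`
and `D_{e₁}` is multiplication by the unimodular function `e₁` on all of `L²`.
-/

namespace DTTO

section Multiplication

lemma Mmul_coeFn (φ : Linf) (f : L2) : ⇑(Mmul φ f) =ᵐ[μT] ⇑φ • ⇑f :=
  MemLp.coeFn_toLp (memL2_smul φ f)

lemma norm_Mmul_of_unimod {φ : Linf} (hφ : ∀ᵐ z ∂μT, ‖φ z‖ = 1) (f : L2) :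
    ‖Mmul φ f‖ = ‖f‖ := by
  rw [Lp.norm_def, Lp.norm_def, eLpNorm_congr_ae (Mmul_coeFn φ f)]
  congr 1
  refine eLpNorm_congr_norm_ae ?_
  filter_upwards [hφ] with x hx
  rw [Pi.smul_apply', smul_eq_mul, norm_mul, hx, one_mul]

lemma inner_Mmul_Mmul_of_unimod {φ : Linf} (hφ : ∀ᵐ z ∂μT, ‖φ z‖ = 1) (f g : L2) :
    ⟪Mmul φ f, Mmul φ g⟫_ℂ = ⟪f, g⟫_ℂ :=
  LinearIsometry.inner_map_map ⟨(Mmul φ).toLinearMap, norm_Mmul_of_unimod hφ⟩ f g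

lemma toL2_coeFn (φ : Linf) : ⇑(toL2 φ) =ᵐ[μT] ⇑φ :=
  MemLp.coeFn_toLp _

lemma Mmul_fourierLp (n m : ℤ) :
    Mmul (fourierLp ⊤ n) (fourierLp 2 m) = fourierLp 2 (n + m) := by
  refine Lp.ext ?_
  filter_upwards [Mmul_coeFn (fourierLp ⊤ n) (fourierLp 2 m), coeFn_fourierLp ⊤ n,
    coeFn_fourierLp 2 m, coeFn_fourierLp 2 (n + m)] with x h1 h2 h3 h4
  rw [h1, h4, Pi.smul_apply', h2, h3, smul_eq_mul, ← fourier_add]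

lemma Mmul_fourierLp_zero (φ : Linf) : Mmul φ (fourierLp 2 0) = toL2 φ := by
  refine Lp.ext ?_
  filter_upwards [Mmul_coeFn φ (fourierLp 2 0), coeFn_fourierLp 2 (0 : ℤ), toL2_coeFn φ]
    with x h1 h2 h3
  rw [h1, h3, Pi.smul_apply', h2, fourier_zero, smul_eq_mul, mul_one]

lemma e1_unimod : ∀ᵐ z ∂μT, ‖e1 z‖ = 1 := by
  filter_upwards [coeFn_fourierLp ⊤ 1] with x hx
  rw [e1, hx, fourier_apply]
  exact Circle.norm_coe _

end Multiplication

section Hardy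

lemma norm_fourierLp (n : ℤ) : ‖(fourierLp 2 n : L2)‖ = 1 := orthonormal_fourier.1 n

lemma fourierLp_natCast_mem_H2 (n : ℕ) : (fourierLp 2 (n : ℤ) : L2) ∈ H2 :=
  Submodule.le_topologicalClosure _ (Submodule.subset_span ⟨n, rfl⟩)

lemma H2_le_of_fourierLp_mem {S : Submodule ℂ L2} (hS : IsClosed (S : Set L2))
    (h : ∀ n : ℕ, (fourierLp 2 (n : ℤ) : L2) ∈ S) : H2 ≤ S :=
  Submodule.topologicalClosure_minimal _ (Submodule.span_le.2 (Set.range_subset_iff.2 h)) hS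

lemma fourierLp_mem_Hminus {m : ℤ} (hm : m < 0) : (fourierLp 2 m : L2) ∈ Hminus := by
  have hH2 : H2 ≤ (ℂ ∙ (fourierLp 2 m : L2))ᗮ :=
    H2_le_of_fourierLp_mem (Submodule.isClosed_orthogonal _) fun n =>
      Submodule.mem_orthogonal_singleton_iff_inner_right.2 (inner_fourierLp_eq_zero (by omega))
  exact (Submodule.mem_orthogonal _ _).2 fun v hv =>
    Submodule.mem_orthogonal_singleton_iff_inner_left.1 (hH2 hv)

end Hardy

section Isometry

lemma Hminus_le_KuP (u : Linf) : Hminus ≤ KuP u := Submodule.orthogonal_le (Ku_le_H2 u)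

lemma Mmul_mem_KuP_of_isometry {u φ : Linf} (hφ : ∀ᵐ z ∂μT, ‖φ z‖ = 1)
    (hiso : ∀ f : KuP u, ‖Dop u φ f‖ = ‖f‖) (f : KuP u) : Mmul φ f ∈ KuP u :=
  (Submodule.mem_iff_norm_starProjection _ _).2 ((hiso f).trans (norm_Mmul_of_unimod hφ f).symm)

lemma H2_le_KuP_of_isometry {u : Linf} (hiso : ∀ f : KuP u, ‖Dop u e1 f‖ = ‖f‖) :
    H2 ≤ KuP u := by
  have hshift : ∀ n : ℕ, (fourierLp 2 ((n : ℤ) - 1) : L2) ∈ KuP u := by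
    intro n
    induction n with
    | zero => simpa using Hminus_le_KuP u em1_mem
    | succ n ih =>
      convert Mmul_mem_KuP_of_isometry e1_unimod hiso ⟨_, ih⟩ using 2
      rw [e1, Mmul_fourierLp]
      push_cast
      ring_nf
  refine H2_le_of_fourierLp_mem (Submodule.isClosed_orthogonal _) fun n => ?_
  simpa using hshift (n + 1)

lemma Ku_eq_bot_of_isometry {u : Linf} (hiso : ∀ f : KuP u, ‖Dop u e1 f‖ = ‖f‖) :
    Ku u = ⊥ :=
  le_bot_iff.1 <| (le_inf le_rfl ((Ku_le_H2 u).trans (H2_le_KuP_of_isometry hiso))).trans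
    (Submodule.inf_orthogonal_eq_bot (Ku u)).le

lemma norm_Dop_of_Ku_eq_bot {u φ : Linf} (hK : Ku u = ⊥) (hφ : ∀ᵐ z ∂μT, ‖φ z‖ = 1)
    (f : KuP u) : ‖Dop u φ f‖ = ‖f‖ := by
  have hmem : Mmul φ f ∈ (Ku u)ᗮ := by
    rw [hK, Submodule.bot_orthogonal_eq_top]
    exact Submodule.mem_top
  exact (Submodule.norm_starProjection_apply _ hmem).trans (norm_Mmul_of_unimod hφ f)

end Isometry

section ModelSpace

lemma inner_fourierLp_zero_Mmul (φ : Linf) (n : ℤ) :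
    ⟪fourierLp 2 0, Mmul φ (fourierLp 2 n)⟫_ℂ = ⟪fourierLp 2 (-n), toL2 φ⟫_ℂ := by
  rw [L2.inner_def, L2.inner_def]
  refine integral_congr_ae ?_
  filter_upwards [Mmul_coeFn φ (fourierLp 2 n), coeFn_fourierLp 2 (0 : ℤ), coeFn_fourierLp 2 n,
    coeFn_fourierLp 2 (-n), toL2_coeFn φ] with x h1 h2 h3 h4 h5
  simp only [h1, h2, h3, h4, h5, Pi.smul_apply', smul_eq_mul, RCLike.inner_apply,
    fourier_zero, fourier_neg, map_one, Complex.conj_conj]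
  ring

lemma inner_fourierLp_zero_Mmul_of_mem_H2 {u : Linf} (hu : MemHinf u) {h : L2} (hh : h ∈ H2) :
    ⟪fourierLp 2 0, Mmul u h⟫_ℂ = ⟪fourierLp 2 0, toL2 u⟫_ℂ * ⟪fourierLp 2 0, h⟫_ℂ := by
  set e₀ : L2 := fourierLp 2 0
  have hker : H2 ≤ (innerSL ℂ e₀ ∘L Mmul u).eqLocus
      (⟪e₀, toL2 u⟫_ℂ • innerSL ℂ e₀ : L2 →L[ℂ] ℂ) := by
    refine H2_le_of_fourierLp_mem (ContinuousLinearMap.isClosed_eqLocus _ _) fun n => ?_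
    show ⟪e₀, Mmul u _⟫_ℂ = ⟪e₀, toL2 u⟫_ℂ * ⟪e₀, _⟫_ℂ
    rcases n with _ | n
    · rw [Nat.cast_zero, Mmul_fourierLp_zero, inner_self_eq_norm_sq_to_K, norm_fourierLp]
      simp
    · have h0 : ⟪fourierLp 2 (-((n + 1 : ℕ) : ℤ)), toL2 u⟫_ℂ = 0 :=
        Submodule.inner_left_of_mem_orthogonal hu (fourierLp_mem_Hminus (by omega))
      rw [inner_fourierLp_zero_Mmul, h0, inner_fourierLp_eq_zero (by omega), mul_zero]
  simpa using hker hh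

lemma fourierLp_zero_sub_smul_toL2_mem_Ku {u : Linf} (hu : IsInnerFn u) :
    fourierLp 2 0 - (starRingEnd ℂ ⟪fourierLp 2 0, toL2 u⟫_ℂ) • toL2 u ∈ Ku u := by
  refine Submodule.mem_inf.2
    ⟨H2.sub_mem (by simpa using fourierLp_natCast_mem_H2 0) (H2.smul_mem _ hu.memH2), ?_⟩
  rw [Submodule.mem_orthogonal']
  rintro _ ⟨h, hh, rfl⟩
  have hu_h : ⟪toL2 u, Mmul u h⟫_ℂ = ⟪fourierLp 2 0, h⟫_ℂ := by
    rw [← Mmul_fourierLp_zero, inner_Mmul_Mmul_of_unimod hu.unimod]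
  simp [inner_sub_left, inner_smul_left, hu_h, inner_fourierLp_zero_Mmul_of_mem_H2 hu.memH2 hh]

lemma ae_eq_const_of_Ku_eq_bot {u : Linf} (hu : IsInnerFn u) (hK : Ku u = ⊥) :
    ∃ c : ℂ, ‖c‖ = 1 ∧ (⇑u : 𝕋c → ℂ) =ᵐ[μT] fun _ => c := by
  set c := ⟪fourierLp 2 0, toL2 u⟫_ℂ
  have hk : fourierLp 2 0 = (starRingEnd ℂ c) • toL2 u := by
    have h := fourierLp_zero_sub_smul_toL2_mem_Ku hu
    rwa [hK, Submodule.mem_bot, sub_eq_zero] at h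
  have hnorm : ‖toL2 u‖ = 1 := by
    rw [← Mmul_fourierLp_zero, norm_Mmul_of_unimod hu.unimod, norm_fourierLp]
  have hc : ‖c‖ = 1 := by
    simpa [norm_smul, hnorm, norm_fourierLp] using (congrArg norm hk).symm
  have hu_eq : toL2 u = c • fourierLp 2 0 := by
    rw [hk, smul_smul, Complex.mul_conj, Complex.normSq_eq_norm_sq, hc]
    simp
  refine ⟨c, hc, ?_⟩
  filter_upwards [toL2_coeFn u, Lp.coeFn_smul c (fourierLp 2 (0 : ℤ) : L2),
    coeFn_fourierLp 2 (0 : ℤ)] with x h1 h2 h3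
  rw [← h1, hu_eq, h2, Pi.smul_apply, h3, fourier_zero, smul_eq_mul, mul_one]

lemma Ku_eq_bot_of_ae_eq_const {u : Linf} {c : ℂ} (hc : c ≠ 0)
    (huc : (⇑u : 𝕋c → ℂ) =ᵐ[μT] fun _ => c) : Ku u = ⊥ := by
  have hMu : ∀ f : L2, Mmul u f = c • f := fun f => Lp.ext <| by
    filter_upwards [Mmul_coeFn u f, huc, Lp.coeFn_smul c f] with x h1 h2 h3
    rw [h1, h3, Pi.smul_apply', h2, Pi.smul_apply]
  have huH2 : uH2 u = H2 := by
    refine le_antisymm ?_ fun f hf => ⟨c⁻¹ • f, H2.smul_mem _ hf, ?_⟩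
    · rintro _ ⟨f, hf, rfl⟩
      simpa [hMu] using H2.smul_mem c hf
    · simp [hMu, smul_smul, hc]
  rw [Ku, huH2, Submodule.inf_orthogonal_eq_bot]

end ModelSpace

/-- The dual truncated Toeplitz operator `D_{e₁}` on `K_u^⊥` is an isometry
iff `u` is a.e. equal to a constant of modulus `1`. -/
theorem Du_isometry_iff_const (u : Linf) (hu : IsInnerFn u) :
    (∀ f : KuP u, ‖Dop u e1 f‖ = ‖f‖)
      ↔ ∃ c : ℂ, ‖c‖ = 1 ∧ (⇑u : 𝕋c → ℂ) =ᵐ[μT] fun _ => c := by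
  refine ⟨fun hiso => ae_eq_const_of_Ku_eq_bot hu (Ku_eq_bot_of_isometry hiso), ?_⟩
  rintro ⟨c, hc, huc⟩
  exact norm_Dop_of_Ku_eq_bot (Ku_eq_bot_of_ae_eq_const (norm_ne_zero_iff.1 (by simp [hc])) huc)
    e1_unimod

end DTTO
end
end

section
/- Let u be a nonconstant inner function. On H² ⊕ H²₋ define the block operator D̃(f, g) = (Sf + H_{u e₋₁}* g, Qg), where S : H² → H² is the unilateral shift Sf = e₁ · f, H_{u e₋₁}* : H²₋ → H² is the adjoint of the Hankel operator with symbol ζ ↦ u(ζ)ζ̄, and Q : H²₋ → H²₋ is Qg = P₋(e₁ · g). Then N(D̃) = {0} ⊕ span{e₋₁} if u(0) = 0, and N(D̃) = {0} if u(0) ≠ 0. -/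
open MeasureTheory Complex
open scoped InnerProductSpace ENNReal

noncomputable section

namespace DTTO

/-- The block operator `D̃(f, g) = (S f + H_{u e₋₁}* g, Q g)` on `H² ⊕ H²₋`. -/
def Dtilde (u : Linf) : (H2 × Hminus) →L[ℂ] (H2 × Hminus) :=
  ((Top e1 ∘L ContinuousLinearMap.fst ℂ H2 Hminus)
      + (ContinuousLinearMap.adjoint (Hop (mulL u eneg1))
          ∘L ContinuousLinearMap.snd ℂ H2 Hminus)).prod
    (Qop ∘L ContinuousLinearMap.snd ℂ H2 Hminus)


/-! Write a kernel vector as `(f, g)`. If `Q g = 0` then `e₁ g ∈ H²`, so every Fourier coefficient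
of `g` below `-1` vanishes; as `g ⊥ H²`, `g` is a multiple `c e₋₁`. For `u ∈ H²`, pairing with the
exponentials gives `H_{u e₋₁}* e₋₁ = conj u(0) • e₀`, so the first component of `D̃ (f, c e₋₁)` is
`e₁ f + c conj u(0) • e₀`. Its `0`-th coefficient is `c conj u(0)`, because that of `e₁ f` is the
`(-1)`-st of `f ∈ H²`; hence `c conj u(0) = 0`, and then `e₁ f = 0` forces `f = 0`. -/

lemma inner_L2 (f g : L2) : ⟪f, g⟫_ℂ = ∫ z, starRingEnd ℂ (f z) * g z ∂μT := by
  simp only [MeasureTheory.L2.inner_def, RCLike.inner_apply, mul_comm]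

lemma inner_fourierLp_fourierLp (m n : ℤ) :
    ⟪(fourierLp 2 m : L2), (fourierLp 2 n : L2)⟫_ℂ = if m = n then 1 else 0 := by
  simpa only [coe_fourierBasis] using
    orthonormal_iff_ite.mp (fourierBasis (T := 2 * Real.pi)).orthonormal m n

lemma inner_fourierLp_eq_fourierCoeff (n : ℤ) (x : L2) :
    ⟪(fourierLp 2 n : L2), x⟫_ℂ = fourierCoeff (⇑x) n := by
  rw [← fourierBasis_repr, HilbertBasis.repr_apply_apply, coe_fourierBasis]

lemma ext_inner_fourierLp {x y : L2}
    (h : ∀ n : ℤ, ⟪(fourierLp 2 n : L2), x⟫_ℂ = ⟪(fourierLp 2 n : L2), y⟫_ℂ) : x = y :=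
  (fourierBasis (T := 2 * Real.pi)).repr.injective <| lp.ext <| funext fun n => by
    simpa only [HilbertBasis.repr_apply_apply, coe_fourierBasis] using h n

lemma fourierLp_mem_H2 {n : ℤ} (hn : 0 ≤ n) : (fourierLp 2 n : L2) ∈ H2 := by
  lift n to ℕ using hn
  exact Submodule.le_topologicalClosure _ (Submodule.subset_span ⟨n, rfl⟩)

lemma H2_le_ker_innerSL_fourierLp {n : ℤ} (hn : n < 0) :
    H2 ≤ (innerSL ℂ (fourierLp 2 n : L2)).ker :=
  Submodule.topologicalClosure_minimal _
    (Submodule.span_le.mpr <| by rintro _ ⟨m, rfl⟩; exact inner_fourierLp_eq_zero (by omega))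
    (ContinuousLinearMap.isClosed_ker _)

lemma inner_fourierLp_eq_zero_of_mem_H2 {x : L2} (hx : x ∈ H2) {n : ℤ} (hn : n < 0) :
    ⟪(fourierLp 2 n : L2), x⟫_ℂ = 0 :=
  H2_le_ker_innerSL_fourierLp hn hx

lemma inner_fourierLp_eq_zero_of_mem_Hminus {x : L2} (hx : x ∈ Hminus) {n : ℤ} (hn : 0 ≤ n) :
    ⟪(fourierLp 2 n : L2), x⟫_ℂ = 0 :=
  Submodule.inner_right_of_mem_orthogonal (fourierLp_mem_H2 hn) hx

lemma fourierCoeff_eq_zero_of_memHinf {u : Linf} (hu : MemHinf u) {n : ℤ} (hn : n < 0) :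
    fourierCoeff (⇑u) n = 0 := by
  rw [← fourierCoeff_congr_ae (MemLp.coeFn_toLp _), ← inner_fourierLp_eq_fourierCoeff]
  exact inner_fourierLp_eq_zero_of_mem_H2 hu hn

lemma coeFn_Mmul (φ : Linf) (x : L2) : ⇑(Mmul φ x) =ᵐ[μT] ⇑φ • ⇑x :=
  (memL2_smul φ x).coeFn_toLp

lemma Mmul_fourierLp_fourierLp (k n : ℤ) :
    Mmul (fourierLp ⊤ k) (fourierLp 2 n) = (fourierLp 2 (k + n) : L2) := by
  refine Lp.ext ?_
  filter_upwards [coeFn_Mmul (fourierLp ⊤ k) (fourierLp 2 n),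
    coeFn_fourierLp ⊤ k, coeFn_fourierLp 2 n, coeFn_fourierLp 2 (k + n)] with z h1 h2 h3 h4
  rw [h1, h4, Pi.smul_apply', h2, h3, smul_eq_mul, ← fourier_add]

lemma inner_fourierLp_Mmul_fourierLp (k n : ℤ) (x : L2) :
    ⟪(fourierLp 2 n : L2), Mmul (fourierLp ⊤ k) x⟫_ℂ = ⟪(fourierLp 2 (n - k) : L2), x⟫_ℂ := by
  rw [inner_L2, inner_L2]
  refine integral_congr_ae ?_
  filter_upwards [coeFn_Mmul (fourierLp ⊤ k) x, coeFn_fourierLp ⊤ k,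
    coeFn_fourierLp 2 n, coeFn_fourierLp 2 (n - k)] with z h1 h2 h3 h4
  rw [h1, h3, h4, Pi.smul_apply', h2, smul_eq_mul, ← fourier_neg, ← fourier_neg, ← mul_assoc,
    ← fourier_add, neg_sub, sub_eq_neg_add]

lemma Mmul_fourierLp_injective (k : ℤ) : Function.Injective (Mmul (fourierLp ⊤ k)) :=
  fun x y h => ext_inner_fourierLp fun n => by
    simpa only [add_sub_cancel_right, inner_fourierLp_Mmul_fourierLp] using
      congrArg (⟪(fourierLp 2 (n + k) : L2), ·⟫_ℂ) h

lemma H2_le_comap_Mmul_fourierLp {k : ℤ} (hk : 0 ≤ k) :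
    H2 ≤ H2.comap (Mmul (fourierLp ⊤ k)).toLinearMap := by
  refine Submodule.topologicalClosure_minimal _ ?_
    ((Submodule.isClosed_topologicalClosure _).preimage (Mmul _).continuous)
  rw [Submodule.span_le]
  rintro _ ⟨n, rfl⟩
  show Mmul _ _ ∈ H2
  rw [Mmul_fourierLp_fourierLp]
  exact fourierLp_mem_H2 (by omega)

lemma coe_Top_e1 (f : H2) : ((Top e1 f : H2) : L2) = Mmul e1 f :=
  Submodule.starProjection_eq_self_iff.mpr (H2_le_comap_Mmul_fourierLp zero_le_one f.2)

lemma inner_fourierLp_succ_Mmul_e1 (n : ℤ) (x : L2) :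
    ⟪(fourierLp 2 (n + 1) : L2), Mmul e1 x⟫_ℂ = ⟪(fourierLp 2 n : L2), x⟫_ℂ := by
  rw [e1, inner_fourierLp_Mmul_fourierLp, add_sub_cancel_right]

lemma coe_em1 : ((em1 : Hminus) : L2) = fourierLp 2 (-1) := rfl

lemma Qop_eq_zero_iff (g : Hminus) : Qop g = 0 ↔ Mmul e1 g ∈ H2 := by
  rw [show Qop g = Submodule.orthogonalProjectionOnto Hminus (Mmul e1 g) from rfl,
    Submodule.orthogonalProjectionOnto_eq_zero_iff,
    show Hminusᗮ = H2 from Submodule.orthogonal_orthogonal H2]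

lemma ker_Qop : LinearMap.ker (Qop : Hminus →ₗ[ℂ] Hminus) = ℂ ∙ em1 := by
  ext g
  rw [LinearMap.mem_ker, ContinuousLinearMap.coe_coe, Qop_eq_zero_iff,
    Submodule.mem_span_singleton]
  constructor
  · intro hg
    refine ⟨⟪(fourierLp 2 (-1) : L2), (g : L2)⟫_ℂ, Subtype.ext <| ext_inner_fourierLp fun n => ?_⟩
    rw [Submodule.coe_smul, inner_smul_right, coe_em1, inner_fourierLp_fourierLp]
    rcases lt_trichotomy n (-1) with hn | rfl | hn
    · rw [if_neg hn.ne, mul_zero, ← inner_fourierLp_succ_Mmul_e1,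
        inner_fourierLp_eq_zero_of_mem_H2 hg (by omega)]
    · rw [if_pos rfl, mul_one]
    · rw [if_neg hn.ne', mul_zero, inner_fourierLp_eq_zero_of_mem_Hminus g.2 (by omega)]
  · rintro ⟨c, rfl⟩
    rw [Submodule.coe_smul, map_smul, coe_em1, e1, Mmul_fourierLp_fourierLp]
    exact Submodule.smul_mem _ _ (fourierLp_mem_H2 le_rfl)

lemma coeFn_mulL (φ ψ : Linf) : ⇑(mulL φ ψ) =ᵐ[μT] ⇑φ • ⇑ψ :=
  (memLinf_mul φ ψ).coeFn_toLp

lemma inner_em1_Mmul_mulL_eneg1 (u : Linf) (n : ℤ) :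
    ⟪(fourierLp 2 (-1) : L2), Mmul (mulL u eneg1) (fourierLp 2 n)⟫_ℂ = fourierCoeff (⇑u) (-n) := by
  rw [inner_L2, fourierCoeff]
  refine integral_congr_ae ?_
  filter_upwards [coeFn_Mmul (mulL u eneg1) (fourierLp 2 n), coeFn_mulL u eneg1,
    coeFn_fourierLp ⊤ (-1), coeFn_fourierLp 2 (-1), coeFn_fourierLp 2 n] with z h1 h2 h3 h4 h5
  rw [h1, Pi.smul_apply', h2, Pi.smul_apply', show ⇑eneg1 z = _ from h3, h4, h5, smul_eq_mul,
    smul_eq_mul, smul_eq_mul, ← fourier_neg, neg_neg, neg_neg]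
  have hunit : fourier 1 z * fourier (-1) z = 1 := by rw [← fourier_add, add_neg_cancel, fourier_zero]
  linear_combination (⇑u z * fourier n z) * hunit

lemma coe_adjoint_Hop_em1 {u : Linf} (hu : MemHinf u) :
    ((ContinuousLinearMap.adjoint (Hop (mulL u eneg1)) em1 : H2) : L2)
      = starRingEnd ℂ (coef0 u) • fourierLp 2 0 := by
  refine ext_inner_fourierLp fun n => ?_
  rw [inner_smul_right, inner_fourierLp_fourierLp]
  rcases lt_or_ge n 0 with hn | hn
  · simp only [if_neg hn.ne, mul_zero]
    exact inner_fourierLp_eq_zero_of_mem_H2 (Submodule.coe_mem _) hn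
  · let en : H2 := ⟨(fourierLp 2 n : L2), fourierLp_mem_H2 hn⟩
    have hinner : ⟪(fourierLp 2 n : L2),
        ((ContinuousLinearMap.adjoint (Hop (mulL u eneg1)) em1 : H2) : L2)⟫_ℂ
        = starRingEnd ℂ ⟪(fourierLp 2 (-1) : L2), Mmul (mulL u eneg1) en⟫_ℂ := by
      change ⟪en, _⟫_ℂ = _
      rw [ContinuousLinearMap.adjoint_inner_right, inner_conj_symm]
      exact Submodule.inner_orthogonalProjectionOnto_eq_of_mem_right (K := Hminus) em1 _
    rw [hinner, show (en : L2) = fourierLp 2 n from rfl, inner_em1_Mmul_mulL_eneg1]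
    rcases hn.eq_or_lt with rfl | hn
    · rw [if_pos rfl, mul_one, neg_zero]; rfl
    · rw [if_neg hn.ne', mul_zero, fourierCoeff_eq_zero_of_memHinf hu (by omega), map_zero]

lemma eq_zero_of_Mmul_e1_add_smul_fourierLp_zero_eq_zero {f : L2} (hf : f ∈ H2) {a : ℂ}
    (h : Mmul e1 f + a • fourierLp 2 0 = 0) : f = 0 ∧ a = 0 := by
  have hshift := inner_fourierLp_succ_Mmul_e1 (-1) f
  rw [neg_add_cancel, inner_fourierLp_eq_zero_of_mem_H2 hf (by norm_num)] at hshift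
  have ha : a = 0 := by
    simpa only [inner_add_right, inner_smul_right, inner_fourierLp_fourierLp, hshift, if_true,
      mul_one, zero_add, inner_zero_right] using congrArg (⟪(fourierLp 2 0 : L2), ·⟫_ℂ) h
  refine ⟨Mmul_fourierLp_injective 1 ?_, ha⟩
  rw [ha, zero_smul, add_zero] at h
  rw [map_zero]
  exact h

lemma coe_Dtilde_fst_smul_em1 {u : Linf} (hu : MemHinf u) (f : H2) (c : ℂ) :
    ((Dtilde u (f, c • em1)).1 : L2)
      = Mmul e1 f + (c * starRingEnd ℂ (coef0 u)) • fourierLp 2 0 := by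
  rw [show (Dtilde u (f, c • em1)).1
      = Top e1 f + c • ContinuousLinearMap.adjoint (Hop (mulL u eneg1)) em1 by
      simp [Dtilde], Submodule.coe_add, Submodule.coe_smul, coe_Top_e1, coe_adjoint_Hop_em1 hu,
    smul_smul]

lemma Dtilde_eq_zero_iff {u : Linf} (hu : MemHinf u) (f : H2) (g : Hminus) :
    Dtilde u (f, g) = 0 ↔ f = 0 ∧ ∃ c : ℂ, c * starRingEnd ℂ (coef0 u) = 0 ∧ g = c • em1 := by
  have hQ : Qop g = 0 ↔ ∃ c : ℂ, c • em1 = g := by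
    rw [← Submodule.mem_span_singleton, ← ker_Qop]; rfl
  rw [Prod.ext_iff, Prod.fst_zero, Prod.snd_zero, show (Dtilde u (f, g)).2 = Qop g from rfl, hQ]
  constructor
  · rintro ⟨h1, c, rfl⟩
    rw [← Submodule.coe_eq_zero, coe_Dtilde_fst_smul_em1 hu] at h1
    obtain ⟨hf, hc⟩ := eq_zero_of_Mmul_e1_add_smul_fourierLp_zero_eq_zero f.2 h1
    exact ⟨Submodule.coe_eq_zero.mp hf, c, hc, rfl⟩
  · rintro ⟨rfl, c, hc, rfl⟩
    refine ⟨?_, c, rfl⟩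
    rw [← Submodule.coe_eq_zero, coe_Dtilde_fst_smul_em1 hu, hc]
    simp

theorem kernel_Dtilde_general (u : Linf) (hu : IsInnerFn u) :
    (coef0 u = 0 →
      LinearMap.ker (Dtilde u : (H2 × Hminus) →ₗ[ℂ] (H2 × Hminus)) = Submodule.prod ⊥ (Submodule.span ℂ {em1}))
    ∧ (coef0 u ≠ 0 → LinearMap.ker (Dtilde u : (H2 × Hminus) →ₗ[ℂ] (H2 × Hminus)) = ⊥) := by
  refine ⟨fun h0 => ?_, fun h0 => ?_⟩
  · ext ⟨f, g⟩
    simp [Dtilde_eq_zero_iff hu.memH2, h0, Submodule.mem_span_singleton, eq_comm]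
  · refine (Submodule.eq_bot_iff _).mpr fun ⟨f, g⟩ hp => ?_
    obtain ⟨rfl, c, hc, rfl⟩ := (Dtilde_eq_zero_iff hu.memH2 f g).mp hp
    rw [mul_eq_zero, map_eq_zero, or_iff_left h0] at hc
    rw [hc, zero_smul]
    rfl

/-- `N(D̃) = {0} ⊕ span{e₋₁}` if `u(0) = 0`, and `N(D̃) = {0}` if `u(0) ≠ 0`. -/
theorem kernel_Dtilde (u : Linf) (hu : IsInnerFn u) (hnc : Nonconst u) :
    (coef0 u = 0 →
      LinearMap.ker (Dtilde u : (H2 × Hminus) →ₗ[ℂ] (H2 × Hminus)) = Submodule.prod ⊥ (Submodule.span ℂ {em1}))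
    ∧ (coef0 u ≠ 0 → LinearMap.ker (Dtilde u : (H2 × Hminus) →ₗ[ℂ] (H2 × Hminus)) = ⊥) :=
  kernel_Dtilde_general u hu

end DTTO
end
end
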